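/- Let (L, L̄) ∈ 𝔄 with L_{≥1} = Λ and L̄_{≤−2} = 0, and let p ≥ 2 be an integer. For the covectors (L^p, 0), (L^{p−1}, 0), (L^{p−2}, 0) one has res([L, L^k]) = 0 (so the correction terms ζ and 𝒵 vanish, taking the finitely supported discrete primitives), and the Dirac-reduced Poisson tensors satisfy P₁^red(L^p, 0) = P₂^red(L^{p−1}, 0) = P₃^red(L^{p−2}, 0) = ([(L^p)₊, L], [(L^p)₊, L̄]); likewise P₁^red(0, L̄^p) = P₂^red(0, L̄^{p−1}) = P₃^red(0, L̄^{p−2}) = ([(L̄^p)₋, L], [(L̄^p)₋, L̄]). Moreover each of these values lies in (A⁺)_{≤0} ⊕ (A⁻)_{≥−1}, i.e. is tangent to the affine space of operators of the given form. -/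
import Mathlib


noncomputable section

/-- Formal difference operators `X = ∑ₖ aₖ Λᵏ`, encoded by their coefficient functions:
`X k n` is the value `aₖ(n)` of the coefficient of `Λᵏ`. -/
abbrev DOp : Type := ℤ → ℤ → ℂ

/-- Product of difference operators, determined by `Λᵏ a = (a ∘ (·+k)) Λᵏ`:
the coefficient of `Λᵐ` in `X*Y` at `n` is `∑_{k+l=m} aₖ(n) bₗ(n+k)`. -/
def dmul (X Y : DOp) : DOp := fun m n => ∑ᶠ k : ℤ, X k n * Y (m - k) (n + k)

/-- Commutator `[X,Y] = XY - YX`. -/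
def dcomm (X Y : DOp) : DOp := dmul X Y - dmul Y X

/-- Truncation `X_{≥K}`. -/
def truncGe (K : ℤ) (X : DOp) : DOp := fun k n => if K ≤ k then X k n else 0
/-- Truncation `X_{≤K}`. -/
def truncLe (K : ℤ) (X : DOp) : DOp := fun k n => if k ≤ K then X k n else 0
/-- Truncation `X_{>K}`. -/
def truncGt (K : ℤ) (X : DOp) : DOp := fun k n => if K < k then X k n else 0
/-- Truncation `X_{<K}`. -/
def truncLt (K : ℤ) (X : DOp) : DOp := fun k n => if k < K then X k n else 0

/-- `X₊ := X_{≥0}`. -/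
def dpos (X : DOp) : DOp := truncGe 0 X

/-- `X₋ := X_{<0}`. -/
def dneg (X : DOp) : DOp := truncLt 0 X

/-- The shift operator `Λ`. -/
def dlam : DOp := fun k _ => if k = 1 then 1 else 0

/-- The identity operator. -/
def done : DOp := fun k _ => if k = 0 then 1 else 0

/-- Powers of a difference operator. -/
def dpow (X : DOp) : ℕ → DOp
  | 0 => done
  | n + 1 => dmul (dpow X n) X

/-- The residue: coefficient of `Λ⁰`. -/
def dres (X : DOp) : ℤ → ℂ := X 0

/-- The trace: `tr X = ∑ₙ a₀(n)`. -/
def dtr (X : DOp) : ℂ := ∑ᶠ n : ℤ, X 0 n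

/-- `A⁺`: coefficients vanish in all sufficiently high degrees. -/
def IsUpper (X : DOp) : Prop := ∃ K : ℤ, ∀ k : ℤ, K < k → X k = 0

/-- `A⁻`: coefficients vanish in all sufficiently low degrees. -/
def IsLower (X : DOp) : Prop := ∃ K : ℤ, ∀ k : ℤ, k < K → X k = 0

/-- `A⁰`: only finitely many nonzero coefficient functions. -/
def IsBdd (X : DOp) : Prop := {k : ℤ | X k ≠ 0}.Finite

/-- All coefficient functions finitely supported (finite total support). -/
def FinSuppOp (X : DOp) : Prop := (Function.support fun pr : ℤ × ℤ => X pr.1 pr.2).Finite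

/-- Membership in `𝔄 = A⁺ ⊕ A⁻`. -/
def InA (x : DOp × DOp) : Prop := IsUpper x.1 ∧ IsLower x.2

/-- Componentwise commutator on `𝔄`. -/
def pcomm (x y : DOp × DOp) : DOp × DOp := (dcomm x.1 y.1, dcomm x.2 y.2)

/-- Trace pairing `⟨(X,X̄),(Y,Ȳ)⟩ = tr(XY) + tr(X̄Ȳ)` on `𝔄`. -/
def ip (x y : DOp × DOp) : ℂ := dtr (dmul x.1 y.1) + dtr (dmul x.2 y.2)

/-- The first Poisson tensor `P₁` on `𝔄`, at the point `Lp = (L, L̄)`,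
evaluated on the covector `x = (X, X̄)`. -/
def P1T (Lp x : DOp × DOp) : DOp × DOp :=
  (dcomm Lp.1 (dneg x.1 - dneg x.2)
      - truncLe 0 (dcomm Lp.1 x.1 + dcomm Lp.2 x.2),
   dcomm Lp.2 (dpos x.2 - dpos x.1)
      - truncGt 0 (dcomm Lp.1 x.1 + dcomm Lp.2 x.2))

/-- The second Poisson tensor `P₂` on `𝔄`. -/
def P2T (Lp x : DOp × DOp) : DOp × DOp :=
  ((1 / 2 : ℂ) •
      (dcomm Lp.1 (dneg (dmul Lp.1 x.1 + dmul x.1 Lp.1)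
            - dneg (dmul Lp.2 x.2 + dmul x.2 Lp.2))
        - dmul Lp.1 (truncLe 0 (dcomm Lp.1 x.1 + dcomm Lp.2 x.2))
        - dmul (truncLe 0 (dcomm Lp.1 x.1 + dcomm Lp.2 x.2)) Lp.1),
   (1 / 2 : ℂ) •
      (dcomm Lp.2 (dpos (dmul Lp.2 x.2 + dmul x.2 Lp.2)
            - dpos (dmul Lp.1 x.1 + dmul x.1 Lp.1))
        - dmul Lp.2 (truncGt 0 (dcomm Lp.1 x.1 + dcomm Lp.2 x.2))
        - dmul (truncGt 0 (dcomm Lp.1 x.1 + dcomm Lp.2 x.2)) Lp.2))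

/-- The third Poisson tensor `P₃` on `𝔄`. -/
def P3T (Lp x : DOp × DOp) : DOp × DOp :=
  (dcomm Lp.1 (dneg (dmul (dmul Lp.1 x.1) Lp.1 - dmul (dmul Lp.2 x.2) Lp.2))
      - dmul (dmul Lp.1 (truncLe 0 (dcomm Lp.1 x.1 + dcomm Lp.2 x.2))) Lp.1,
   dcomm Lp.2 (dpos (dmul (dmul Lp.2 x.2) Lp.2 - dmul (dmul Lp.1 x.1) Lp.1))
      - dmul (dmul Lp.2 (truncGt 0 (dcomm Lp.1 x.1 + dcomm Lp.2 x.2))) Lp.2)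

/-- The Dirac-reduced second Poisson tensor, with correction operator `ζ`. -/
def P2red (L Lb X Xb ζ : DOp) : DOp × DOp :=
  ((1 / 2 : ℂ) •
      (dcomm L (dneg (dmul L X + dmul X L) - dneg (dmul Lb Xb + dmul Xb Lb))
        + dcomm L ζ
        - dmul L (truncLe 0 (dcomm L X + dcomm Lb Xb))
        - dmul (truncLe 0 (dcomm L X + dcomm Lb Xb)) L),
   (1 / 2 : ℂ) •
      (dcomm Lb (dpos (dmul Lb Xb + dmul Xb Lb) - dpos (dmul L X + dmul X L))
        + dcomm Lb ζ
        - dmul Lb (truncGt 0 (dcomm L X + dcomm Lb Xb))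
        - dmul (truncGt 0 (dcomm L X + dcomm Lb Xb)) Lb))

/-- The Dirac-reduced third Poisson tensor, with correction operator `𝒵`. -/
def P3red (L Lb X Xb Z : DOp) : DOp × DOp :=
  (dcomm L (dneg (dmul (dmul L X) L - dmul (dmul Lb Xb) Lb))
      - dmul (dmul L (truncLe (-2) (dcomm L X + dcomm Lb Xb))) L
      - truncLe 0 (dmul (dmul L (truncGe (-1) (truncLe 0 (dcomm L X + dcomm Lb Xb)))) L)
      + truncLe 0 (dcomm L Z),
   dcomm Lb (dpos (dmul (dmul Lb Xb) Lb - dmul (dmul L X) L))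
      - dmul (dmul Lb (truncGt 0 (dcomm Lb Xb + dcomm L X))) Lb
      + truncGe (-1) (dcomm Lb Z))

open Function

/-- Upper bound on the support degrees. -/
def UBd (a : ℤ) (X : DOp) : Prop := ∀ k : ℤ, a < k → X k = 0
/-- Lower bound on the support degrees. -/
def LBd (a : ℤ) (X : DOp) : Prop := ∀ k : ℤ, k < a → X k = 0

lemma UBd.mono {a b : ℤ} {X : DOp} (h : UBd a X) (hab : a ≤ b) : UBd b X :=
  fun k hk => h k (by omega)

lemma LBd.mono {a b : ℤ} {X : DOp} (h : LBd a X) (hab : b ≤ a) : LBd b X :=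
  fun k hk => h k (by omega)

lemma UBd.app {a : ℤ} {X : DOp} (h : UBd a X) {k : ℤ} (hk : a < k) (n : ℤ) : X k n = 0 := by
  rw [h k hk]; rfl

lemma LBd.app {a : ℤ} {X : DOp} (h : LBd a X) {k : ℤ} (hk : k < a) (n : ℤ) : X k n = 0 := by
  rw [h k hk]; rfl

lemma UBd.sub {a : ℤ} {X Y : DOp} (hX : UBd a X) (hY : UBd a Y) : UBd a (X - Y) := by
  intro k hk; funext n
  show X k n - Y k n = 0
  rw [hX.app hk, hY.app hk, sub_zero]

lemma LBd.sub {a : ℤ} {X Y : DOp} (hX : LBd a X) (hY : LBd a Y) : LBd a (X - Y) := by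
  intro k hk; funext n
  show X k n - Y k n = 0
  rw [hX.app hk, hY.app hk, sub_zero]

lemma UBd.neg {a : ℤ} {X : DOp} (hX : UBd a X) : UBd a (-X) := by
  intro k hk; funext n
  show -(X k n) = 0
  rw [hX.app hk, neg_zero]

lemma LBd.neg {a : ℤ} {X : DOp} (hX : LBd a X) : LBd a (-X) := by
  intro k hk; funext n
  show -(X k n) = 0
  rw [hX.app hk, neg_zero]

/-! ### Support estimates -/

lemma supp_ub {X Y : DOp} {a b : ℤ} (hX : UBd a X) (hY : UBd b Y) (m n : ℤ) :
    (Function.support fun k => X k n * Y (m - k) (n + k)) ⊆ Set.Icc (m - b) a := by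
  intro k hk
  simp only [Function.mem_support] at hk
  constructor
  · by_contra h
    exact hk (by rw [hY.app (k := m - k) (by omega), mul_zero])
  · by_contra h
    exact hk (by rw [hX.app (k := k) (by omega), zero_mul])

lemma supp_lb {X Y : DOp} {a b : ℤ} (hX : LBd a X) (hY : LBd b Y) (m n : ℤ) :
    (Function.support fun k => X k n * Y (m - k) (n + k)) ⊆ Set.Icc a (m - b) := by
  intro k hk
  simp only [Function.mem_support] at hk
  constructor
  · by_contra h
    exact hk (by rw [hX.app (k := k) (by omega), zero_mul])
  · by_contra h
    exact hk (by rw [hY.app (k := m - k) (by omega), mul_zero])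

lemma supp_ub_fin {X Y : DOp} {a b : ℤ} (hX : UBd a X) (hY : UBd b Y) (m n : ℤ) :
    (Function.support fun k => X k n * Y (m - k) (n + k)).Finite :=
  (Set.finite_Icc _ _).subset (supp_ub hX hY m n)

lemma supp_lb_fin {X Y : DOp} {a b : ℤ} (hX : LBd a X) (hY : LBd b Y) (m n : ℤ) :
    (Function.support fun k => X k n * Y (m - k) (n + k)).Finite :=
  (Set.finite_Icc _ _).subset (supp_lb hX hY m n)

/-! ### Basic multiplication lemmas -/

lemma dmul_zero (X : DOp) : dmul X 0 = 0 := by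
  funext m n; simp [dmul]

lemma zero_dmul (X : DOp) : dmul 0 X = 0 := by
  funext m n; simp [dmul]

lemma dmul_neg (X Y : DOp) : dmul X (-Y) = -(dmul X Y) := by
  funext m n
  simp only [dmul, Pi.neg_apply, mul_neg]
  exact finsum_neg_distrib _

lemma neg_dmul (X Y : DOp) : dmul (-X) Y = -(dmul X Y) := by
  funext m n
  simp only [dmul, Pi.neg_apply, neg_mul]
  exact finsum_neg_distrib _

lemma UBd.dmul {X Y : DOp} {a b : ℤ} (hX : UBd a X) (hY : UBd b Y) :
    UBd (a + b) (dmul X Y) := by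
  intro k hk; funext n
  show (∑ᶠ j : ℤ, X j n * Y (k - j) (n + j)) = 0
  apply finsum_eq_zero_of_forall_eq_zero
  intro j
  rcases le_or_gt j a with h | h
  · rw [hY.app (k := k - j) (by omega), mul_zero]
  · rw [hX.app (k := j) h, zero_mul]

lemma LBd.dmul {X Y : DOp} {a b : ℤ} (hX : LBd a X) (hY : LBd b Y) :
    LBd (a + b) (dmul X Y) := by
  intro k hk; funext n
  show (∑ᶠ j : ℤ, X j n * Y (k - j) (n + j)) = 0
  apply finsum_eq_zero_of_forall_eq_zero
  intro j
  rcases le_or_gt a j with h | h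
  · rw [hY.app (k := k - j) (by omega), mul_zero]
  · rw [hX.app (k := j) h, zero_mul]

lemma dmul_add_ub {X Y Z : DOp} {a b c : ℤ} (hX : UBd a X) (hY : UBd b Y) (hZ : UBd c Z) :
    dmul X (Y + Z) = dmul X Y + dmul X Z := by
  funext m n
  simp only [dmul, Pi.add_apply, mul_add]
  exact finsum_add_distrib (supp_ub_fin hX hY m n) (supp_ub_fin hX hZ m n)

lemma add_dmul_ub {X Y Z : DOp} {a b c : ℤ} (hX : UBd a X) (hY : UBd b Y) (hZ : UBd c Z) :
    dmul (X + Y) Z = dmul X Z + dmul Y Z := by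
  funext m n
  simp only [dmul, Pi.add_apply, add_mul]
  exact finsum_add_distrib (supp_ub_fin hX hZ m n) (supp_ub_fin hY hZ m n)

lemma dmul_add_lb {X Y Z : DOp} {a b c : ℤ} (hX : LBd a X) (hY : LBd b Y) (hZ : LBd c Z) :
    dmul X (Y + Z) = dmul X Y + dmul X Z := by
  funext m n
  simp only [dmul, Pi.add_apply, mul_add]
  exact finsum_add_distrib (supp_lb_fin hX hY m n) (supp_lb_fin hX hZ m n)

lemma add_dmul_lb {X Y Z : DOp} {a b c : ℤ} (hX : LBd a X) (hY : LBd b Y) (hZ : LBd c Z) :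
    dmul (X + Y) Z = dmul X Z + dmul Y Z := by
  funext m n
  simp only [dmul, Pi.add_apply, add_mul]
  exact finsum_add_distrib (supp_lb_fin hX hZ m n) (supp_lb_fin hY hZ m n)

lemma dmul_sub_ub {X Y Z : DOp} {a b c : ℤ} (hX : UBd a X) (hY : UBd b Y) (hZ : UBd c Z) :
    dmul X (Y - Z) = dmul X Y - dmul X Z := by
  rw [sub_eq_add_neg, dmul_add_ub hX hY hZ.neg, dmul_neg, sub_eq_add_neg]

lemma sub_dmul_ub {X Y Z : DOp} {a b c : ℤ} (hX : UBd a X) (hY : UBd b Y) (hZ : UBd c Z) :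
    dmul (X - Y) Z = dmul X Z - dmul Y Z := by
  rw [sub_eq_add_neg, add_dmul_ub hX hY.neg hZ, neg_dmul, sub_eq_add_neg]

lemma dmul_sub_lb {X Y Z : DOp} {a b c : ℤ} (hX : LBd a X) (hY : LBd b Y) (hZ : LBd c Z) :
    dmul X (Y - Z) = dmul X Y - dmul X Z := by
  rw [sub_eq_add_neg, dmul_add_lb hX hY hZ.neg, dmul_neg, sub_eq_add_neg]

lemma sub_dmul_lb {X Y Z : DOp} {a b c : ℤ} (hX : LBd a X) (hY : LBd b Y) (hZ : LBd c Z) :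
    dmul (X - Y) Z = dmul X Z - dmul Y Z := by
  rw [sub_eq_add_neg, add_dmul_lb hX hY.neg hZ, neg_dmul, sub_eq_add_neg]

/-! ### Units -/

lemma dmul_done (X : DOp) : dmul X done = X := by
  funext m n
  rw [dmul, finsum_eq_single _ m]
  · simp [done]
  · intro k hk
    have : ¬ (m - k = 0) := by omega
    simp [done, this]

lemma done_dmul (X : DOp) : dmul done X = X := by
  funext m n
  rw [dmul, finsum_eq_single _ 0]
  · simp [done]
  · intro k hk
    simp [done, hk]

/-! ### Associativity -/

lemma dmul_assoc_ub {X Y Z : DOp} {a b c : ℤ} (hX : UBd a X) (hY : UBd b Y) (hZ : UBd c Z) :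
    dmul (dmul X Y) Z = dmul X (dmul Y Z) := by
  classical
  have hXY : UBd (a + b) (dmul X Y) := hX.dmul hY
  have hYZ : UBd (b + c) (dmul Y Z) := hY.dmul hZ
  funext m n
  set I : Finset ℤ := Finset.Icc (m - b - c) a with hI
  set K : Finset ℤ := Finset.Icc (m - c) (a + b) with hK
  set J : Finset ℤ := Finset.Icc (m - a - c) b with hJ
  have hLHS : dmul (dmul X Y) Z m n
      = ∑ k ∈ K, ∑ i ∈ I, X i n * Y (k - i) (n + i) * Z (m - k) (n + k) := by
    show (∑ᶠ k : ℤ, dmul X Y k n * Z (m - k) (n + k)) = _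
    rw [finsum_eq_finset_sum_of_support_subset _ (s := K)
      (by rw [hK, Finset.coe_Icc]; exact supp_ub hXY hZ m n)]
    refine Finset.sum_congr rfl fun k hk => ?_
    have : dmul X Y k n = ∑ i ∈ I, X i n * Y (k - i) (n + i) := by
      rw [hK] at hk
      have hkK := Finset.mem_Icc.mp hk
      show (∑ᶠ i : ℤ, X i n * Y (k - i) (n + i)) = _
      refine finsum_eq_finset_sum_of_support_subset _ ?_
      intro i hi
      have h2 := supp_ub hX hY k n hi
      simp only [Set.mem_Icc] at h2
      simp only [hI, Finset.coe_Icc, Set.mem_Icc]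
      omega
    rw [this, Finset.sum_mul]
  have hRHS : dmul X (dmul Y Z) m n
      = ∑ i ∈ I, ∑ j ∈ J, X i n * (Y j (n + i) * Z (m - i - j) (n + i + j)) := by
    show (∑ᶠ i : ℤ, X i n * dmul Y Z (m - i) (n + i)) = _
    rw [finsum_eq_finset_sum_of_support_subset _ (s := I)
      (by
        intro i hi
        have h2 := supp_ub hX hYZ m n hi
        simp only [Set.mem_Icc] at h2
        simp only [hI, Finset.coe_Icc, Set.mem_Icc]
        omega)]
    refine Finset.sum_congr rfl fun i hi => ?_
    rw [hI] at hi
    have hiI := Finset.mem_Icc.mp hi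
    have : dmul Y Z (m - i) (n + i) = ∑ j ∈ J, Y j (n + i) * Z (m - i - j) (n + i + j) := by
      show (∑ᶠ j : ℤ, Y j (n + i) * Z (m - i - j) (n + i + j)) = _
      refine finsum_eq_finset_sum_of_support_subset _ ?_
      intro j hj
      have h2 := supp_ub hY hZ (m - i) (n + i) hj
      simp only [Set.mem_Icc] at h2
      simp only [hJ, Finset.coe_Icc, Set.mem_Icc]
      omega
    rw [this, Finset.mul_sum]
  rw [hLHS, hRHS, Finset.sum_comm]
  refine Finset.sum_congr rfl fun i hi => ?_
  rw [hI] at hi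
  have hiI := Finset.mem_Icc.mp hi
  set g : ℤ → ℂ := fun j => X i n * Y j (n + i) * Z (m - i - j) (n + i + j) with hg
  have hgsupp : Function.support g ⊆ Set.Icc (m - i - c) b := by
    intro j hj
    simp only [Function.mem_support, hg] at hj
    simp only [Set.mem_Icc]
    constructor
    · by_contra hcon
      exact hj (by rw [hZ.app (k := m - i - j) (by omega), mul_zero])
    · by_contra hcon
      exact hj (by rw [hY.app (k := j) (by omega), mul_zero, zero_mul])
  have e1 : (∑ k ∈ K, X i n * Y (k - i) (n + i) * Z (m - k) (n + k))
      = ∑ k ∈ K, g (k - i) := by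
    refine Finset.sum_congr rfl fun k _ => ?_
    simp only [hg]
    have e : m - i - (k - i) = m - k := by omega
    have e' : n + i + (k - i) = n + k := by omega
    rw [e, e']
  have e2 : (∑ k ∈ K, g (k - i)) = ∑ᶠ k, g (k - i) := by
    refine (finsum_eq_finset_sum_of_support_subset _ ?_).symm
    intro k hk
    have hk2 : g (k - i) ≠ 0 := hk
    have hj2 := hgsupp (Function.mem_support.mpr hk2)
    simp only [Set.mem_Icc] at hj2
    simp only [hK, Finset.coe_Icc, Set.mem_Icc]
    omega
  have e3 : (∑ᶠ k, g (k - i)) = ∑ᶠ j, g j := finsum_comp_equiv (Equiv.subRight i)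
  have e4 : (∑ᶠ j, g j) = ∑ j ∈ J, g j := by
    refine finsum_eq_finset_sum_of_support_subset g ?_
    intro j hj
    have hj2 := hgsupp hj
    simp only [Set.mem_Icc] at hj2
    simp only [hJ, Finset.coe_Icc, Set.mem_Icc]
    omega
  rw [e1, e2, e3, e4]
  exact Finset.sum_congr rfl fun j _ => mul_assoc _ _ _

lemma dmul_assoc_lb {X Y Z : DOp} {a b c : ℤ} (hX : LBd a X) (hY : LBd b Y) (hZ : LBd c Z) :
    dmul (dmul X Y) Z = dmul X (dmul Y Z) := by
  classical
  have hXY : LBd (a + b) (dmul X Y) := hX.dmul hY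
  have hYZ : LBd (b + c) (dmul Y Z) := hY.dmul hZ
  funext m n
  set I : Finset ℤ := Finset.Icc a (m - b - c) with hI
  set K : Finset ℤ := Finset.Icc (a + b) (m - c) with hK
  set J : Finset ℤ := Finset.Icc b (m - a - c) with hJ
  have hLHS : dmul (dmul X Y) Z m n
      = ∑ k ∈ K, ∑ i ∈ I, X i n * Y (k - i) (n + i) * Z (m - k) (n + k) := by
    show (∑ᶠ k : ℤ, dmul X Y k n * Z (m - k) (n + k)) = _
    rw [finsum_eq_finset_sum_of_support_subset _ (s := K)
      (by rw [hK, Finset.coe_Icc]; exact supp_lb hXY hZ m n)]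
    refine Finset.sum_congr rfl fun k hk => ?_
    have : dmul X Y k n = ∑ i ∈ I, X i n * Y (k - i) (n + i) := by
      rw [hK] at hk
      have hkK := Finset.mem_Icc.mp hk
      show (∑ᶠ i : ℤ, X i n * Y (k - i) (n + i)) = _
      refine finsum_eq_finset_sum_of_support_subset _ ?_
      intro i hi
      have h2 := supp_lb hX hY k n hi
      simp only [Set.mem_Icc] at h2
      simp only [hI, Finset.coe_Icc, Set.mem_Icc]
      omega
    rw [this, Finset.sum_mul]
  have hRHS : dmul X (dmul Y Z) m n
      = ∑ i ∈ I, ∑ j ∈ J, X i n * (Y j (n + i) * Z (m - i - j) (n + i + j)) := by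
    show (∑ᶠ i : ℤ, X i n * dmul Y Z (m - i) (n + i)) = _
    rw [finsum_eq_finset_sum_of_support_subset _ (s := I)
      (by
        intro i hi
        have h2 := supp_lb hX hYZ m n hi
        simp only [Set.mem_Icc] at h2
        simp only [hI, Finset.coe_Icc, Set.mem_Icc]
        omega)]
    refine Finset.sum_congr rfl fun i hi => ?_
    rw [hI] at hi
    have hiI := Finset.mem_Icc.mp hi
    have : dmul Y Z (m - i) (n + i) = ∑ j ∈ J, Y j (n + i) * Z (m - i - j) (n + i + j) := by
      show (∑ᶠ j : ℤ, Y j (n + i) * Z (m - i - j) (n + i + j)) = _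
      refine finsum_eq_finset_sum_of_support_subset _ ?_
      intro j hj
      have h2 := supp_lb hY hZ (m - i) (n + i) hj
      simp only [Set.mem_Icc] at h2
      simp only [hJ, Finset.coe_Icc, Set.mem_Icc]
      omega
    rw [this, Finset.mul_sum]
  rw [hLHS, hRHS, Finset.sum_comm]
  refine Finset.sum_congr rfl fun i hi => ?_
  rw [hI] at hi
  have hiI := Finset.mem_Icc.mp hi
  set g : ℤ → ℂ := fun j => X i n * Y j (n + i) * Z (m - i - j) (n + i + j) with hg
  have hgsupp : Function.support g ⊆ Set.Icc b (m - i - c) := by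
    intro j hj
    simp only [Function.mem_support, hg] at hj
    simp only [Set.mem_Icc]
    constructor
    · by_contra hcon
      exact hj (by rw [hY.app (k := j) (by omega), mul_zero, zero_mul])
    · by_contra hcon
      exact hj (by rw [hZ.app (k := m - i - j) (by omega), mul_zero])
  have e1 : (∑ k ∈ K, X i n * Y (k - i) (n + i) * Z (m - k) (n + k))
      = ∑ k ∈ K, g (k - i) := by
    refine Finset.sum_congr rfl fun k _ => ?_
    simp only [hg]
    have e : m - i - (k - i) = m - k := by omega
    have e' : n + i + (k - i) = n + k := by omega
    rw [e, e']
  have e2 : (∑ k ∈ K, g (k - i)) = ∑ᶠ k, g (k - i) := by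
    refine (finsum_eq_finset_sum_of_support_subset _ ?_).symm
    intro k hk
    have hk2 : g (k - i) ≠ 0 := hk
    have hj2 := hgsupp (Function.mem_support.mpr hk2)
    simp only [Set.mem_Icc] at hj2
    simp only [hK, Finset.coe_Icc, Set.mem_Icc]
    omega
  have e3 : (∑ᶠ k, g (k - i)) = ∑ᶠ j, g j := finsum_comp_equiv (Equiv.subRight i)
  have e4 : (∑ᶠ j, g j) = ∑ j ∈ J, g j := by
    refine finsum_eq_finset_sum_of_support_subset g ?_
    intro j hj
    have hj2 := hgsupp hj
    simp only [Set.mem_Icc] at hj2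
    simp only [hJ, Finset.coe_Icc, Set.mem_Icc]
    omega
  rw [e1, e2, e3, e4]
  exact Finset.sum_congr rfl fun j _ => mul_assoc _ _ _

/-! ### Powers -/

lemma dpow_succ (X : DOp) (n : ℕ) : dpow X (n + 1) = dmul (dpow X n) X := rfl

lemma done_ub : UBd 0 done := by
  intro k hk; funext n
  show (if k = 0 then (1:ℂ) else 0) = 0
  rw [if_neg (by omega)]

lemma done_lb : LBd 0 done := by
  intro k hk; funext n
  show (if k = 0 then (1:ℂ) else 0) = 0
  rw [if_neg (by omega)]

lemma UBd.dpow {L : DOp} (h : UBd 1 L) : ∀ n : ℕ, UBd (n : ℤ) (dpow L n)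
  | 0 => done_ub
  | (n + 1) => (((UBd.dpow h n).dmul h).mono (by push_cast; omega))

lemma LBd.dpow {L : DOp} (h : LBd (-1) L) : ∀ n : ℕ, LBd (-(n : ℤ)) (dpow L n)
  | 0 => done_lb
  | (n + 1) => (((LBd.dpow h n).dmul h).mono (by push_cast; omega))

lemma dmul_dpow_ub {L : DOp} (h : UBd 1 L) : ∀ n : ℕ, dmul L (dpow L n) = dpow L (n + 1)
  | 0 => by
    show dmul L done = dmul done L
    rw [done_dmul, dmul_done]
  | (n + 1) => by
    rw [dpow_succ, ← dmul_assoc_ub h (h.dpow n) h, dmul_dpow_ub h n, ← dpow_succ]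

lemma dmul_dpow_lb {L : DOp} (h : LBd (-1) L) : ∀ n : ℕ, dmul L (dpow L n) = dpow L (n + 1)
  | 0 => by
    show dmul L done = dmul done L
    rw [done_dmul, dmul_done]
  | (n + 1) => by
    rw [dpow_succ, ← dmul_assoc_lb h (h.dpow n) h, dmul_dpow_lb h n, ← dpow_succ]

/-! ### Commutator basics -/

lemma dcomm_zero_right (X : DOp) : dcomm X 0 = 0 := by
  unfold dcomm; rw [dmul_zero, zero_dmul, sub_zero]

lemma dcomm_zero_left (X : DOp) : dcomm 0 X = 0 := by
  unfold dcomm; rw [dmul_zero, zero_dmul, zero_sub, neg_zero]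

lemma dcomm_neg_right (X Y : DOp) : dcomm X (-Y) = -dcomm X Y := by
  unfold dcomm; rw [dmul_neg, neg_dmul]; abel

lemma dcomm_skew (X Y : DOp) : dcomm X Y = -dcomm Y X := by
  unfold dcomm; rw [neg_sub]

lemma dcomm_self_dpow_ub {L : DOp} (h : UBd 1 L) (n : ℕ) : dcomm L (dpow L n) = 0 := by
  unfold dcomm
  rw [dmul_dpow_ub h n, ← dpow_succ, sub_self]

lemma dcomm_self_dpow_lb {L : DOp} (h : LBd (-1) L) (n : ℕ) : dcomm L (dpow L n) = 0 := by
  unfold dcomm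
  rw [dmul_dpow_lb h n, ← dpow_succ, sub_self]

lemma dcomm_add_ub {X Y Z : DOp} {a b c : ℤ} (hX : UBd a X) (hY : UBd b Y) (hZ : UBd c Z) :
    dcomm X (Y + Z) = dcomm X Y + dcomm X Z := by
  unfold dcomm
  rw [dmul_add_ub hX hY hZ, add_dmul_ub hY hZ hX]; abel

lemma dcomm_sub_ub {X Y Z : DOp} {a b c : ℤ} (hX : UBd a X) (hY : UBd b Y) (hZ : UBd c Z) :
    dcomm X (Y - Z) = dcomm X Y - dcomm X Z := by
  unfold dcomm
  rw [dmul_sub_ub hX hY hZ, sub_dmul_ub hY hZ hX]; abel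

lemma dcomm_add_lb {X Y Z : DOp} {a b c : ℤ} (hX : LBd a X) (hY : LBd b Y) (hZ : LBd c Z) :
    dcomm X (Y + Z) = dcomm X Y + dcomm X Z := by
  unfold dcomm
  rw [dmul_add_lb hX hY hZ, add_dmul_lb hY hZ hX]; abel

lemma dcomm_sub_lb {X Y Z : DOp} {a b c : ℤ} (hX : LBd a X) (hY : LBd b Y) (hZ : LBd c Z) :
    dcomm X (Y - Z) = dcomm X Y - dcomm X Z := by
  unfold dcomm
  rw [dmul_sub_lb hX hY hZ, sub_dmul_lb hY hZ hX]; abel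

/-! ### Pointwise lemmas on truncations -/

lemma truncLe_zero_op (K : ℤ) : truncLe K (0 : DOp) = 0 := by
  funext k n; simp [truncLe]

lemma truncGe_zero_op (K : ℤ) : truncGe K (0 : DOp) = 0 := by
  funext k n; simp [truncGe]

lemma truncGt_zero_op (K : ℤ) : truncGt K (0 : DOp) = 0 := by
  funext k n; simp [truncGt]

lemma dneg_zero_op : dneg (0 : DOp) = 0 := by
  funext k n; simp [dneg, truncLt]

lemma dpos_zero_op : dpos (0 : DOp) = 0 := by
  funext k n; simp [dpos, truncGe]

lemma dneg_add (X Y : DOp) : dneg (X + Y) = dneg X + dneg Y := by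
  funext k n
  simp only [dneg, truncLt, Pi.add_apply]
  split <;> simp

lemma dpos_add (X Y : DOp) : dpos (X + Y) = dpos X + dpos Y := by
  funext k n
  simp only [dpos, truncGe, Pi.add_apply]
  split <;> simp

lemma dneg_neg (X : DOp) : dneg (-X) = -dneg X := by
  funext k n
  simp only [dneg, truncLt, Pi.neg_apply]
  split <;> simp

lemma dpos_neg (X : DOp) : dpos (-X) = -dpos X := by
  funext k n
  simp only [dpos, truncGe, Pi.neg_apply]
  split <;> simp

lemma dpos_add_dneg (X : DOp) : dpos X + dneg X = X := by
  funext k n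
  simp only [dpos, dneg, truncGe, truncLt, Pi.add_apply]
  rcases le_or_gt 0 k with h | h
  · rw [if_pos h, if_neg (by omega), add_zero]
  · rw [if_neg (by omega), if_pos h, zero_add]

lemma dneg_eq (X : DOp) : dneg X = X - dpos X := by
  funext k n
  show (if k < 0 then X k n else 0) = X k n - (if 0 ≤ k then X k n else 0)
  rcases le_or_gt 0 k with h | h
  · rw [if_neg (by omega), if_pos h, sub_self]
  · rw [if_pos h, if_neg (by omega), sub_zero]

lemma dpos_eq (X : DOp) : dpos X = X - dneg X := by
  funext k n
  show (if 0 ≤ k then X k n else 0) = X k n - (if k < 0 then X k n else 0)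
  rcases le_or_gt 0 k with h | h
  · rw [if_pos h, if_neg (by omega), sub_zero]
  · rw [if_neg (by omega), if_pos h, sub_self]

lemma ub_dneg (X : DOp) : UBd (-1) (dneg X) := by
  intro k hk; funext n
  show (if k < 0 then X k n else 0) = 0
  rw [if_neg (by omega)]

lemma lb_dpos (X : DOp) : LBd 0 (dpos X) := by
  intro k hk; funext n
  show (if 0 ≤ k then X k n else 0) = 0
  rw [if_neg (by omega)]

lemma UBd.dpos {a : ℤ} {X : DOp} (h : UBd a X) : UBd a (dpos X) := by
  intro k hk; funext n
  show (if 0 ≤ k then X k n else 0) = 0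
  split
  · exact h.app hk n
  · rfl

lemma LBd.dneg {a : ℤ} {X : DOp} (h : LBd a X) : LBd a (dneg X) := by
  intro k hk; funext n
  show (if k < 0 then X k n else 0) = 0
  split
  · exact h.app hk n
  · rfl

lemma UBd.truncGe_one {X : DOp} (h : UBd 0 X) : truncGe 1 X = 0 := by
  funext k n
  show (if 1 ≤ k then X k n else 0) = 0
  split
  · exact h.app (by omega) n
  · rfl

lemma LBd.truncLe_neg_two {X : DOp} (h : LBd (-1) X) : truncLe (-2) X = 0 := by
  funext k n
  show (if k ≤ -2 then X k n else 0) = 0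
  split
  · exact h.app (by omega) n
  · rfl

/-! ### Key identities -/

lemma keyA {L M : DOp} {b : ℤ} (hL : UBd 1 L) (hM : UBd b M) (h : dcomm L M = 0) :
    dcomm L (dneg M) = dcomm (dpos M) L := by
  rw [dneg_eq, dcomm_sub_ub hL hM hM.dpos, h, zero_sub, dcomm_skew (dpos M) L]

lemma keyB {Lb M : DOp} {b : ℤ} (hLb : LBd (-1) Lb) (hM : LBd b M) (h : dcomm Lb M = 0) :
    dcomm Lb (dpos M) = dcomm (dneg M) Lb := by
  rw [dpos_eq, dcomm_sub_lb hLb hM hM.dneg, h, zero_sub, dcomm_skew (dneg M) Lb]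

/-! ### Scalar lemmas -/

lemma half_smul (W : DOp) : (1 / 2 : ℂ) • (W + W) = W := by
  funext k n
  simp only [Pi.smul_apply, Pi.add_apply, smul_eq_mul]
  ring

lemma half_smul_neg (W : DOp) : (1 / 2 : ℂ) • (-(W + W)) = -W := by
  funext k n
  simp only [Pi.smul_apply, Pi.neg_apply, Pi.add_apply, smul_eq_mul]
  ring

/-- tri-Hamiltonian recursion for the Dirac-reduced Poisson tensors on
the affine space `L_{≥1} = Λ`, `L̄_{≤−2} = 0`. For the covectors `(L^k, 0)` and
`(0, L̄^k)` the residues `res([L, L^k])`, `res([L̄, L̄^k])` vanish, hence the correction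
terms `ζ` and `𝒵` vanish (taking finitely supported discrete primitives), and
`P₁ʳᵉᵈ(L^p,0) = P₂ʳᵉᵈ(L^{p−1},0) = P₃ʳᵉᵈ(L^{p−2},0) = ([(L^p)₊,L], [(L^p)₊,L̄])`,
`P₁ʳᵉᵈ(0,L̄^p) = P₂ʳᵉᵈ(0,L̄^{p−1}) = P₃ʳᵉᵈ(0,L̄^{p−2}) = ([(L̄^p)₋,L], [(L̄^p)₋,L̄])`;
all these values are tangent to the affine space, i.e. lie in `(A⁺)_{≤0} ⊕ (A⁻)_{≥−1}`. -/
theorem reduced_tri_hamiltonian (L Lb : DOp)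
    (hL : truncGe 1 L = dlam) (hLb : truncLe (-2) Lb = 0)
    (p : ℕ) (hp : 2 ≤ p) :
    dres (dcomm L (dpow L p)) = 0
    ∧ dres (dcomm L (dpow L (p - 1))) = 0
    ∧ dres (dcomm L (dpow L (p - 2))) = 0
    ∧ dres (dcomm Lb (dpow Lb p)) = 0
    ∧ dres (dcomm Lb (dpow Lb (p - 1))) = 0
    ∧ dres (dcomm Lb (dpow Lb (p - 2))) = 0
    ∧ P1T (L, Lb) (dpow L p, 0)
        = (dcomm (dpos (dpow L p)) L, dcomm (dpos (dpow L p)) Lb)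
    ∧ P2red L Lb (dpow L (p - 1)) 0 0
        = (dcomm (dpos (dpow L p)) L, dcomm (dpos (dpow L p)) Lb)
    ∧ P3red L Lb (dpow L (p - 2)) 0 0
        = (dcomm (dpos (dpow L p)) L, dcomm (dpos (dpow L p)) Lb)
    ∧ P1T (L, Lb) (0, dpow Lb p)
        = (dcomm (dneg (dpow Lb p)) L, dcomm (dneg (dpow Lb p)) Lb)
    ∧ P2red L Lb 0 (dpow Lb (p - 1)) 0
        = (dcomm (dneg (dpow Lb p)) L, dcomm (dneg (dpow Lb p)) Lb)
    ∧ P3red L Lb 0 (dpow Lb (p - 2)) 0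
        = (dcomm (dneg (dpow Lb p)) L, dcomm (dneg (dpow Lb p)) Lb)
    ∧ truncGe 1 (dcomm (dpos (dpow L p)) L) = 0
    ∧ truncLe (-2) (dcomm (dpos (dpow L p)) Lb) = 0
    ∧ truncGe 1 (dcomm (dneg (dpow Lb p)) L) = 0
    ∧ truncLe (-2) (dcomm (dneg (dpow Lb p)) Lb) = 0 := by
  have hL1 : UBd 1 L := by
    intro k hk; funext n
    have h2 := congrFun (congrFun hL k) n
    simp only [truncGe, dlam] at h2
    rw [if_pos (by omega : (1:ℤ) ≤ k), if_neg (by omega : ¬ k = 1)] at h2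
    exact h2
  have hLb1 : LBd (-1) Lb := by
    intro k hk; funext n
    have h2 := congrFun (congrFun hLb k) n
    simp only [truncLe, Pi.zero_apply] at h2
    rw [if_pos (by omega : k ≤ (-2:ℤ))] at h2
    exact h2
  obtain ⟨q, rfl⟩ : ∃ q, p = q + 2 := ⟨p - 2, by omega⟩
  simp only [show q + 2 - 1 = q + 1 from rfl, show q + 2 - 2 = q from rfl]
  have hc2 : dcomm L (dpow L (q + 2)) = 0 := dcomm_self_dpow_ub hL1 _
  have hc1 : dcomm L (dpow L (q + 1)) = 0 := dcomm_self_dpow_ub hL1 _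
  have hc0 : dcomm L (dpow L q) = 0 := dcomm_self_dpow_ub hL1 _
  have hbc2 : dcomm Lb (dpow Lb (q + 2)) = 0 := dcomm_self_dpow_lb hLb1 _
  have hbc1 : dcomm Lb (dpow Lb (q + 1)) = 0 := dcomm_self_dpow_lb hLb1 _
  have hbc0 : dcomm Lb (dpow Lb q) = 0 := dcomm_self_dpow_lb hLb1 _
  have hm1 : dmul L (dpow L (q + 1)) = dpow L (q + 2) := dmul_dpow_ub hL1 (q + 1)
  have hm1' : dmul (dpow L (q + 1)) L = dpow L (q + 2) := (dpow_succ L (q + 1)).symm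
  have hm0 : dmul L (dpow L q) = dpow L (q + 1) := dmul_dpow_ub hL1 q
  have hbm1 : dmul Lb (dpow Lb (q + 1)) = dpow Lb (q + 2) := dmul_dpow_lb hLb1 (q + 1)
  have hbm1' : dmul (dpow Lb (q + 1)) Lb = dpow Lb (q + 2) := (dpow_succ Lb (q + 1)).symm
  have hbm0 : dmul Lb (dpow Lb q) = dpow Lb (q + 1) := dmul_dpow_lb hLb1 q
  have kA : dcomm L (dneg (dpow L (q + 2))) = dcomm (dpos (dpow L (q + 2))) L :=
    keyA hL1 (hL1.dpow (q + 2)) hc2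
  have kB : dcomm Lb (dpos (dpow Lb (q + 2))) = dcomm (dneg (dpow Lb (q + 2))) Lb :=
    keyB hLb1 (hLb1.dpow (q + 2)) hbc2
  refine ⟨?_, ?_, ?_, ?_, ?_, ?_, ?_, ?_, ?_, ?_, ?_, ?_, ?_, ?_, ?_, ?_⟩
  · rw [hc2]; rfl
  · rw [hc1]; rfl
  · rw [hc0]; rfl
  · rw [hbc2]; rfl
  · rw [hbc1]; rfl
  · rw [hbc0]; rfl
  · -- P1T for (L^p, 0)
    simp only [P1T, hc2, dcomm_zero_right, add_zero, zero_add, dneg_zero_op, dpos_zero_op,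
      sub_zero, zero_sub, truncLe_zero_op, truncGt_zero_op, dcomm_neg_right, Prod.mk.injEq]
    refine ⟨kA, ?_⟩
    rw [dcomm_skew (dpos (dpow L (q + 2))) Lb]
  · -- P2red for (L^{p-1}, 0)
    simp only [P2red, hc1, dcomm_zero_right, dmul_zero, zero_dmul, add_zero, zero_add,
      dneg_zero_op, dpos_zero_op, sub_zero, zero_sub, truncLe_zero_op, truncGt_zero_op,
      hm1, hm1', dneg_add, dpos_add, dcomm_neg_right, Prod.mk.injEq]
    constructor
    · rw [dcomm_add_ub hL1 (ub_dneg _) (ub_dneg _), half_smul]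
      exact kA
    · rw [dcomm_add_lb hLb1 (lb_dpos _) (lb_dpos _), half_smul_neg,
        dcomm_skew (dpos (dpow L (q + 2))) Lb]
  · -- P3red for (L^{p-2}, 0)
    simp only [P3red, hc0, dcomm_zero_right, dmul_zero, zero_dmul, add_zero, zero_add,
      sub_zero, zero_sub, truncLe_zero_op, truncGe_zero_op, truncGt_zero_op,
      dneg_neg, dpos_neg, dcomm_neg_right, hm0, hm1', Prod.mk.injEq]
    refine ⟨kA, ?_⟩
    rw [dcomm_skew (dpos (dpow L (q + 2))) Lb]
  · -- P1T for (0, Lb^p)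
    simp only [P1T, hbc2, dcomm_zero_right, add_zero, zero_add, dneg_zero_op, dpos_zero_op,
      sub_zero, zero_sub, truncLe_zero_op, truncGt_zero_op, dcomm_neg_right, Prod.mk.injEq]
    refine ⟨?_, kB⟩
    rw [dcomm_skew (dneg (dpow Lb (q + 2))) L]
  · -- P2red for (0, Lb^{p-1})
    simp only [P2red, hbc1, dcomm_zero_right, dmul_zero, zero_dmul, add_zero, zero_add,
      dneg_zero_op, dpos_zero_op, sub_zero, zero_sub, truncLe_zero_op, truncGt_zero_op,
      hbm1, hbm1', dneg_add, dpos_add, dcomm_neg_right, Prod.mk.injEq]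
    constructor
    · rw [dcomm_add_ub hL1 (ub_dneg _) (ub_dneg _), half_smul_neg,
        dcomm_skew (dneg (dpow Lb (q + 2))) L]
    · rw [dcomm_add_lb hLb1 (lb_dpos _) (lb_dpos _), half_smul]
      exact kB
  · -- P3red for (0, Lb^{p-2})
    simp only [P3red, hbc0, dcomm_zero_right, dmul_zero, zero_dmul, add_zero, zero_add,
      sub_zero, zero_sub, truncLe_zero_op, truncGe_zero_op, truncGt_zero_op,
      dneg_neg, dpos_neg, dcomm_neg_right, hbm0, hbm1', Prod.mk.injEq]
    refine ⟨?_, kB⟩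
    rw [dcomm_skew (dneg (dpow Lb (q + 2))) L]
  · rw [← kA]
    exact UBd.truncGe_one (UBd.sub ((hL1.dmul (ub_dneg _)).mono (by omega))
      (((ub_dneg _).dmul hL1).mono (by omega)))
  · exact LBd.truncLe_neg_two (LBd.sub (((lb_dpos _).dmul hLb1).mono (by omega))
      ((hLb1.dmul (lb_dpos _)).mono (by omega)))
  · exact UBd.truncGe_one (UBd.sub (((ub_dneg _).dmul hL1).mono (by omega))
      ((hL1.dmul (ub_dneg _)).mono (by omega)))
  · rw [← kB]
    exact LBd.truncLe_neg_two (LBd.sub ((hLb1.dmul (lb_dpos _)).mono (by omega))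
      (((lb_dpos _).dmul hLb1).mono (by omega)))
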